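/- arXiv:1507.00053 — 8 statements merged into one kernel-verified Lean document; each statement's English description precedes it below -/
import Mathlib

section
/- Let n and k be integers with 0 < k and 2k < n. If v : ℝ → ℝ is twice differentiable, v(t) > 0 for all t ∈ ℝ, and v solves the Delaunay ODE at every t ∈ ℝ, then the function t ↦ H(v(t), v'(t)) is constant on ℝ; that is, H(v(t₁), v'(t₁)) = H(v(t₂), v'(t₂)) for all t₁, t₂ ∈ ℝ. -/
open Real

/-- The Delaunay ODE for the σₖ-curvature problem:
`(v² − (2k/(n−2k))² v'²)^(k−1) · (v − (2k/(n−2k))² v'') = (n/(n−2k)) · v^(2kn/(n−2k) − 1)`. -/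
def DelaunayODE (n k : ℤ) (v : ℝ → ℝ) : Prop :=
  ∀ t : ℝ,
    (v t ^ 2 - (2 * (k : ℝ) / ((n : ℝ) - 2 * k)) ^ 2 * deriv v t ^ 2) ^ (k.toNat - 1) *
        (v t - (2 * (k : ℝ) / ((n : ℝ) - 2 * k)) ^ 2 * deriv (deriv v) t) =
      (n : ℝ) / ((n : ℝ) - 2 * k) * v t ^ (2 * (k : ℝ) * n / ((n : ℝ) - 2 * k) - 1)

/-- The Hamiltonian `H(v,w) = (v² − (2k/(n−2k))² w²)^k − v^(2kn/(n−2k))`. -/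
noncomputable def Ham (n k : ℤ) (v w : ℝ) : ℝ :=
  (v ^ 2 - (2 * (k : ℝ) / ((n : ℝ) - 2 * k)) ^ 2 * w ^ 2) ^ k.toNat -
    v ^ (2 * (k : ℝ) * n / ((n : ℝ) - 2 * k))

section Energy

variable {u w : ℝ → ℝ} {a p : ℝ} {m : ℕ}

theorem hasDerivAt_pow_sub_rpow {t u₁ w₁ : ℝ} (hu : HasDerivAt u u₁ t) (hw : HasDerivAt w w₁ t)
    (hpos : 0 < u t) :
    HasDerivAt (fun s => (u s ^ 2 - a * w s ^ 2) ^ m - u s ^ p)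
      (m * (u t ^ 2 - a * w t ^ 2) ^ (m - 1) * (2 * u t * u₁ - a * (2 * w t * w₁)) -
        u₁ * p * u t ^ (p - 1)) t := by
  have hbase : HasDerivAt (fun s => u s ^ 2 - a * w s ^ 2)
      (2 * u t * u₁ - a * (2 * w t * w₁)) t :=
    ((hu.fun_pow 2).fun_sub ((hw.fun_pow 2).const_mul a)).congr_deriv (by norm_num)
  exact (hbase.pow m).sub (hu.rpow_const (Or.inl hpos.ne'))

/-- The derivative of the energy is `2u'` times the difference of the two sides of `hode`. -/
theorem pow_sub_rpow_eq_of_ode (hu : Differentiable ℝ u) (hu' : Differentiable ℝ (deriv u))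
    (hpos : ∀ t, 0 < u t)
    (hode : ∀ t, m * (u t ^ 2 - a * deriv u t ^ 2) ^ (m - 1) * (u t - a * deriv (deriv u) t) =
      p / 2 * u t ^ (p - 1))
    (t₁ t₂ : ℝ) :
    (u t₁ ^ 2 - a * deriv u t₁ ^ 2) ^ m - u t₁ ^ p =
      (u t₂ ^ 2 - a * deriv u t₂ ^ 2) ^ m - u t₂ ^ p := by
  have hderiv : ∀ t, HasDerivAt (fun s => (u s ^ 2 - a * deriv u s ^ 2) ^ m - u s ^ p) 0 t := by
    intro t
    convert hasDerivAt_pow_sub_rpow (hu t).hasDerivAt (hu' t).hasDerivAt (hpos t) using 1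
    linear_combination (-2 * deriv u t) * hode t
  exact is_const_of_deriv_eq_zero (fun t => (hderiv t).differentiableAt)
    (fun t => (hderiv t).deriv) t₁ t₂

end Energy

/-- Since `p / 2 = k n / (n - 2k)` for `p = 2kn / (n - 2k)`, multiplying by `k` puts the
Delaunay ODE in the form of `pow_sub_rpow_eq_of_ode` with `m = k`. -/
theorem DelaunayODE.mul_toNat {n k : ℤ} {v : ℝ → ℝ} (hk : 0 ≤ k) (hode : DelaunayODE n k v)
    (t : ℝ) :
    k.toNat * (v t ^ 2 - (2 * (k : ℝ) / ((n : ℝ) - 2 * k)) ^ 2 * deriv v t ^ 2) ^ (k.toNat - 1) *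
        (v t - (2 * (k : ℝ) / ((n : ℝ) - 2 * k)) ^ 2 * deriv (deriv v) t) =
      2 * (k : ℝ) * n / ((n : ℝ) - 2 * k) / 2 *
        v t ^ (2 * (k : ℝ) * n / ((n : ℝ) - 2 * k) - 1) := by
  have hcast : ((k.toNat : ℕ) : ℝ) = k := by exact_mod_cast Int.toNat_of_nonneg hk
  rw [hcast, mul_assoc, hode t]
  ring

theorem hamiltonian_constant_along_solutions_general
    (n k : ℤ) (hk : 0 < k) (v : ℝ → ℝ)
    (hv : Differentiable ℝ v) (hv' : Differentiable ℝ (deriv v))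
    (hpos : ∀ t : ℝ, 0 < v t) (hode : DelaunayODE n k v) :
    ∀ t₁ t₂ : ℝ, Ham n k (v t₁) (deriv v t₁) = Ham n k (v t₂) (deriv v t₂) :=
  pow_sub_rpow_eq_of_ode hv hv' hpos (hode.mul_toNat hk.le)

theorem hamiltonian_constant_along_solutions
    (n k : ℤ) (hk : 0 < k) (hnk : 2 * k < n) (v : ℝ → ℝ)
    (hv : Differentiable ℝ v) (hv' : Differentiable ℝ (deriv v))
    (hpos : ∀ t : ℝ, 0 < v t) (hode : DelaunayODE n k v) :
    ∀ t₁ t₂ : ℝ, Ham n k (v t₁) (deriv v t₁) = Ham n k (v t₂) (deriv v t₂) :=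
  hamiltonian_constant_along_solutions_general n k hk v hv hv' hpos hode
end

section
/- Let n and k be integers with 0 < k and 2k < n. Suppose v : ℝ → ℝ is twice continuously differentiable, v(t) ≥ 0 and v(t)² − (2k/(n−2k))² v'(t)² ≥ 0 for all t, v solves the Delaunay ODE at every t ∈ ℝ, and H(v(t), v'(t)) = 0 for all t ∈ ℝ. Then either v(t) = 0 for all t, or there exists c ∈ ℝ such that v(t) = (cosh(t − c))^(−(n−2k)/(2k)) for all t ∈ ℝ. -/
open Real

/-! Write `a = 2k/(n-2k)`. Both sides of `H = 0` are `k`-th powers of nonnegative numbers, so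
`v² - a²v'² = v^(2a+2)`; in particular `|v'| ≤ v/a`, and by Grönwall a solution vanishing at one
point vanishes identically. For a positive solution the substitution `u = v^(-a)` turns this
constraint into `u² - u'² = 1` and the Delaunay equation into `u'' = u`, whose positive solutions
with `u² - u'² = 1` are the functions `cosh (t - c)`. -/

theorem eq_zero_of_norm_deriv_le_mul_norm {E : Type*} [NormedAddCommGroup E] [NormedSpace ℝ E]
    {f f' : ℝ → E} {K t₀ : ℝ} (hf : ∀ t, HasDerivAt f (f' t) t)
    (bound : ∀ t, ‖f' t‖ ≤ K * ‖f t‖) (h₀ : f t₀ = 0) (t : ℝ) : f t = 0 := by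
  have forward : ∀ {g g' : ℝ → E} {s₀ s : ℝ}, (∀ t, HasDerivAt g (g' t) t) →
      (∀ t, ‖g' t‖ ≤ K * ‖g t‖) → g s₀ = 0 → s₀ ≤ s → g s = 0 :=
    fun hg hgK hg₀ hs => eq_zero_of_abs_deriv_le_mul_abs_self_of_eq_zero_right
      (fun t _ => (hg t).continuousAt.continuousWithinAt) (fun t _ => (hg t).hasDerivWithinAt)
      hg₀ (fun t _ => hgK t) _ ⟨hs, le_rfl⟩
  rcases le_total t₀ t with ht | ht
  · exact forward hf bound h₀ ht
  · have hrev : ∀ s, HasDerivAt (fun s => f (-s)) (-f' (-s)) s := fun s => by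
      simpa [Function.comp_def] using (hf (-s)).scomp s (hasDerivAt_neg s)
    simpa using forward (g := fun s => f (-s)) hrev (fun s => by simpa using bound (-s))
      (by simpa using h₀) (neg_le_neg ht)

theorem eq_mul_exp_of_hasDerivAt_mul_self {f : ℝ → ℝ} {r : ℝ}
    (hf : ∀ t, HasDerivAt f (r * f t) t) (t : ℝ) : f t = f 0 * exp (r * t) := by
  have hderiv : ∀ s, HasDerivAt (fun s => f s * exp (-(r * s))) 0 s := fun s =>
    ((hf s).fun_mul (((hasDerivAt_id' s).const_mul r).fun_neg.exp)).congr_deriv (by ring)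
  have hconst := is_const_of_deriv_eq_zero (fun s => (hderiv s).differentiableAt)
    (fun s => (hderiv s).deriv) t 0
  simp only [mul_zero, neg_zero, exp_zero, mul_one] at hconst
  rw [← hconst, mul_assoc, ← exp_add, neg_add_cancel, exp_zero, mul_one]

theorem exists_eq_cosh_sub_of_hasDerivAt {u u' : ℝ → ℝ} (hu : ∀ t, HasDerivAt u (u' t) t)
    (hu' : ∀ t, HasDerivAt u' (u t) t) (h₀ : u 0 ^ 2 - u' 0 ^ 2 = 1) (hpos : 0 < u 0) :
    ∃ c, ∀ t, u t = cosh (t - c) := by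
  have hplus := eq_mul_exp_of_hasDerivAt_mul_self (r := 1) (f := u + u') fun t => by
    simpa [add_comm] using (hu t).add (hu' t)
  have hminus := eq_mul_exp_of_hasDerivAt_mul_self (r := -1) (f := u - u') fun t => by
    simpa using (hu t).sub (hu' t)
  set A := u 0 + u' 0
  have hA : 0 < A := by nlinarith
  refine ⟨-log A, fun t => ?_⟩
  have hB : u 0 - u' 0 = A⁻¹ := eq_inv_of_mul_eq_one_left (by linear_combination h₀)
  have e₁ : exp (t - -log A) = A * exp t := by
    rw [sub_neg_eq_add, exp_add, exp_log hA, mul_comm]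
  have e₂ : exp (-(t - -log A)) = A⁻¹ * exp (-t) := by
    rw [neg_sub, sub_eq_add_neg, exp_add, exp_neg (log A), exp_log hA, mul_comm]
  specialize hplus t
  specialize hminus t
  simp only [Pi.add_apply, Pi.sub_apply, one_mul, neg_one_mul] at hplus hminus
  rw [cosh_eq, e₁, e₂, ← hB]
  linarith

theorem exists_eq_cosh_sub_rpow_of_hasDerivAt {v v' v'' : ℝ → ℝ} {a : ℝ} (ha : 0 < a)
    (hv : ∀ t, HasDerivAt v (v' t) t) (hv' : ∀ t, HasDerivAt v' (v'' t) t)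
    (hpos : ∀ t, 0 < v t) (hH : ∀ t, v t ^ 2 - a ^ 2 * v' t ^ 2 = v t ^ (2 * a + 2))
    (hode : ∀ t, v t - a ^ 2 * v'' t = (1 + a) * v t ^ (2 * a + 1)) :
    ∃ c, ∀ t, v t = cosh (t - c) ^ (-a⁻¹) := by
  have hq : ∀ t, 0 < v t ^ a := fun t => rpow_pos_of_pos (hpos t) a
  have hH' : ∀ t, v t ^ 2 - a ^ 2 * v' t ^ 2 = (v t ^ a) ^ 2 * v t ^ 2 := fun t => by
    rw [hH, show 2 * a + 2 = a + a + 2 by ring, rpow_add (hpos t), rpow_add (hpos t), rpow_two]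
    ring
  have hode' : ∀ t, v t - a ^ 2 * v'' t = (1 + a) * ((v t ^ a) ^ 2 * v t) := fun t => by
    rw [hode, show 2 * a + 1 = a + a + 1 by ring, rpow_add (hpos t), rpow_add (hpos t), rpow_one]
    ring
  have hreduced : ∀ t, a * (a + 1) * v' t ^ 2 - a * v t * v'' t = v t ^ 2 := fun t =>
    mul_left_cancel₀ ha.ne' (by linear_combination v t * hode' t - (a + 1) * hH' t)
  have hq' : ∀ t, HasDerivAt (fun t => v t ^ a) (a * v t ^ a * v' t / v t) t := fun t =>
    ((hv t).rpow_const (Or.inl (hpos t).ne')).congr_deriv (by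
      rw [rpow_sub_one (hpos t).ne']; ring)
  have hu : ∀ t, HasDerivAt (fun t => (v t ^ a)⁻¹) (-a * v' t / (v t ^ a * v t)) t := fun t =>
    ((hq' t).fun_inv (hq t).ne').congr_deriv (by
      have := (hpos t).ne'; have := (hq t).ne'; field_simp)
  have hu' : ∀ t, HasDerivAt (fun t => -a * v' t / (v t ^ a * v t)) (v t ^ a)⁻¹ t := fun t =>
    (((hv' t).const_mul (-a)).fun_div ((hq' t).fun_mul (hv t))
      (mul_pos (hq t) (hpos t)).ne').congr_deriv (by
      have := (hpos t).ne'; have := (hq t).ne'; field_simp; linear_combination hreduced t)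
  obtain ⟨c, hc⟩ := exists_eq_cosh_sub_of_hasDerivAt hu hu' (by
    have := (hpos 0).ne'; have := (hq 0).ne'; field_simp; linear_combination hH' 0)
    (inv_pos.2 (hq 0))
  refine ⟨c, fun t => ?_⟩
  rw [← hc t, rpow_neg (inv_nonneg.2 (hq t).le), inv_rpow (hq t).le, inv_inv,
    rpow_rpow_inv (hpos t).le ha.ne']

noncomputable def delaunayCoeff (n k : ℤ) : ℝ := 2 * k / (n - 2 * k)

section

variable {n k : ℤ}

lemma delaunayCoeff_pos (hk : 0 < k) (hnk : 2 * k < n) : 0 < delaunayCoeff n k := by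
  have : (2 * k : ℝ) < n := by exact_mod_cast hnk
  exact div_pos (by exact_mod_cast (by omega : 0 < 2 * k)) (by linarith)

lemma Ham_exponent_eq (hk : 0 < k) (hnk : 2 * k < n) :
    2 * (k : ℝ) * n / ((n : ℝ) - 2 * k) = (2 * delaunayCoeff n k + 2) * k.toNat := by
  have : (n : ℝ) - 2 * k ≠ 0 := by
    rw [sub_ne_zero]; exact_mod_cast hnk.ne'
  have hK : ((k.toNat : ℕ) : ℝ) = k := by exact_mod_cast Int.toNat_of_nonneg hk.le
  rw [hK, delaunayCoeff]
  field_simp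
  ring

lemma sq_sub_eq_rpow_of_Ham_eq_zero (hk : 0 < k) (hnk : 2 * k < n) {x y : ℝ} (hx : 0 ≤ x)
    (hxy : 0 ≤ x ^ 2 - delaunayCoeff n k ^ 2 * y ^ 2) (hH : Ham n k x y = 0) :
    x ^ 2 - delaunayCoeff n k ^ 2 * y ^ 2 = x ^ (2 * delaunayCoeff n k + 2) := by
  rw [Ham, ← delaunayCoeff.eq_1, sub_eq_zero, Ham_exponent_eq hk hnk, rpow_mul_natCast hx] at hH
  exact (pow_left_strictMonoOn₀ (by omega)).injOn hxy (rpow_nonneg hx _) hH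

lemma DelaunayODE.sub_eq_one_add_mul_rpow (hk : 0 < k) (hnk : 2 * k < n) {v : ℝ → ℝ}
    (hode : DelaunayODE n k v) {t : ℝ} (hpos : 0 < v t)
    (hH : v t ^ 2 - delaunayCoeff n k ^ 2 * deriv v t ^ 2 = v t ^ (2 * delaunayCoeff n k + 2)) :
    v t - delaunayCoeff n k ^ 2 * deriv (deriv v) t =
      (1 + delaunayCoeff n k) * v t ^ (2 * delaunayCoeff n k + 1) := by
  set a := delaunayCoeff n k with ha
  have : (n : ℝ) - 2 * k ≠ 0 := by
    rw [sub_ne_zero]; exact_mod_cast hnk.ne'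
  have hlead : (n : ℝ) / ((n : ℝ) - 2 * k) = 1 + a := by
    rw [ha, delaunayCoeff]; field_simp; ring
  have hexp : (2 * a + 2) * k.toNat - 1 = (2 * a + 2) * ((k.toNat - 1 : ℕ) : ℝ) + (2 * a + 1) := by
    rw [Nat.cast_sub (by omega)]; ring
  have h := hode t
  rw [← delaunayCoeff.eq_1, ← ha, hlead, Ham_exponent_eq hk hnk, hexp, rpow_add hpos,
    rpow_mul_natCast hpos.le, hH] at h
  have hP : (v t ^ (2 * a + 2)) ^ (k.toNat - 1) ≠ 0 := by positivity
  exact mul_left_cancel₀ hP (by linear_combination h)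

end

theorem zero_energy_solutions_classification
    (n k : ℤ) (hk : 0 < k) (hnk : 2 * k < n) (v : ℝ → ℝ)
    (hv : ContDiff ℝ 2 v)
    (hnonneg : ∀ t : ℝ, 0 ≤ v t)
    (hh : ∀ t : ℝ,
      0 ≤ v t ^ 2 - (2 * (k : ℝ) / ((n : ℝ) - 2 * k)) ^ 2 * deriv v t ^ 2)
    (hode : DelaunayODE n k v)
    (hH : ∀ t : ℝ, Ham n k (v t) (deriv v t) = 0) :
    (∀ t : ℝ, v t = 0) ∨
      ∃ c : ℝ, ∀ t : ℝ,
        v t = Real.cosh (t - c) ^ (-(((n : ℝ) - 2 * k) / (2 * k))) := by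
  have ha := delaunayCoeff_pos hk hnk
  have hv₁ : ∀ t, HasDerivAt v (deriv v t) t := fun t =>
    (hv.differentiable (by norm_num) t).hasDerivAt
  have hv₂ : ∀ t, HasDerivAt (deriv v) (deriv (deriv v) t) t := fun t =>
    ((ContDiff.deriv' (n := 1) hv).differentiable one_ne_zero t).hasDerivAt
  by_cases hzero : ∃ t₀, v t₀ = 0
  · obtain ⟨t₀, ht₀⟩ := hzero
    have hbound : ∀ t, ‖deriv v t‖ ≤ (delaunayCoeff n k)⁻¹ * ‖v t‖ := fun t => by
      rw [Real.norm_eq_abs, Real.norm_eq_abs, le_inv_mul_iff₀ ha, ← abs_of_pos ha, ← abs_mul,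
        ← sq_le_sq, mul_pow]
      exact sub_nonneg.1 (hh t)
    exact Or.inl (eq_zero_of_norm_deriv_le_mul_norm hv₁ hbound ht₀)
  · have hpos : ∀ t, 0 < v t := fun t => (hnonneg t).lt_of_ne' fun h => hzero ⟨t, h⟩
    have hHam : ∀ t, _ := fun t => sq_sub_eq_rpow_of_Ham_eq_zero hk hnk (hnonneg t) (hh t) (hH t)
    obtain ⟨c, hc⟩ := exists_eq_cosh_sub_rpow_of_hasDerivAt ha hv₁ hv₂ hpos hHam
      (fun t => hode.sub_eq_one_add_mul_rpow hk hnk (hpos t) (hHam t))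
    exact Or.inr ⟨c, fun t => by rw [hc t, delaunayCoeff, inv_div]⟩
end

section
/- Let n and k be integers with 0 < k and 2k < n, and set H₀ = (2k/(n−2k)) · ((n−2k)/n)^(n/(2k)). Then the constant function v(t) = ((n−2k)/n)^((n−2k)/(4k²)) is twice continuously differentiable, positive, solves the Delaunay ODE at every t ∈ ℝ, and satisfies H(v(t), v'(t)) = H₀ for all t. Moreover, it is the unique such solution: if w : ℝ → ℝ is twice continuously differentiable with w(t) > 0 and w(t)² − (2k/(n−2k))² w'(t)² ≥ 0 for all t, w solves the Delaunay ODE at every t ∈ ℝ, and H(w(t), w'(t)) = H₀ for all t, then w(t) = ((n−2k)/n)^((n−2k)/(4k²)) for all t. -/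
open Real

/-- The constant value `((n−2k)/n)^((n−2k)/(4k²))` giving the cylindrical solution. -/
noncomputable def cylVal (n k : ℤ) : ℝ :=
  (((n : ℝ) - 2 * k) / n) ^ (((n : ℝ) - 2 * k) / (4 * (k : ℝ) ^ 2))

/-! For `v² − c² w² ≥ 0` (with `c = 2k/(n−2k)`) the Hamiltonian only grows when `w` is
replaced by `0`, and `H(v, 0) = u − u^p` with `u = v^{2k}`, `p = n/(n−2k) > 1`. By Bernoulli's
inequality `u ↦ u − u^p` lies strictly below its tangent line at its critical point `u*`, where
`p·u*^{p−1} = 1`; here `u* = cylVal^{2k}` and the maximum value is `H₀`. Hence `H(w, w') = H₀`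
forces `w = cylVal`. The same critical-point equation makes the constant `cylVal` a solution of
the ODE. -/

theorem rpow_add_mul_rpow_sub_one_mul_sub_lt {p x y : ℝ} (hp : 1 < p) (hx : 0 < x) (hy : 0 < y)
    (hxy : x ≠ y) : y ^ p + p * y ^ (p - 1) * (x - y) < x ^ p := by
  have hs := one_add_mul_self_lt_rpow_one_add (s := x / y - 1)
    (by linarith [div_pos hx hy]) (sub_ne_zero.2 (by rwa [Ne, div_eq_one_iff_eq hy.ne'])) hp
  rw [add_sub_cancel, Real.div_rpow hx.le hy.le, lt_div_iff₀ (rpow_pos_of_pos hy p)] at hs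
  calc y ^ p + p * y ^ (p - 1) * (x - y) = (1 + p * (x / y - 1)) * y ^ p := by
        rw [rpow_sub_one hy.ne']; field_simp
    _ < x ^ p := hs

theorem sub_rpow_lt_sub_rpow_of_mul_rpow_sub_one_eq_one {p x y : ℝ} (hp : 1 < p) (hx : 0 < x)
    (hy : 0 < y) (hxy : x ≠ y) (hcrit : p * y ^ (p - 1) = 1) : x - x ^ p < y - y ^ p := by
  have := rpow_add_mul_rpow_sub_one_mul_sub_lt hp hx hy hxy
  rw [hcrit, one_mul] at this
  linarith

section Delaunay

variable {n k : ℤ}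

theorem sq_pow_toNat_eq_rpow (hk : 0 ≤ k) (v : ℝ) :
    (v ^ 2) ^ k.toNat = v ^ (2 * (k : ℝ)) := by
  have hk' : ((k.toNat : ℕ) : ℝ) = k := by exact_mod_cast Int.toNat_of_nonneg hk
  rw [← pow_mul, ← rpow_natCast, ← hk']
  push_cast
  rfl

theorem rpow_two_mul_mul_div_sub {v : ℝ} (hv : 0 ≤ v) :
    v ^ (2 * (k : ℝ) * n / ((n : ℝ) - 2 * k)) =
      (v ^ (2 * (k : ℝ))) ^ ((n : ℝ) / ((n : ℝ) - 2 * k)) := by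
  rw [← rpow_mul hv, mul_div_assoc]

theorem Ham_le_Ham_zero {v w : ℝ}
    (h : 0 ≤ v ^ 2 - (2 * (k : ℝ) / ((n : ℝ) - 2 * k)) ^ 2 * w ^ 2) :
    Ham n k v w ≤ Ham n k v 0 := by
  refine sub_le_sub_right (pow_le_pow_left₀ h ?_ _) _
  nlinarith [sq_nonneg (2 * (k : ℝ) / ((n : ℝ) - 2 * k) * w)]

theorem Ham_zero_eq (hk : 0 ≤ k) {v : ℝ} (hv : 0 ≤ v) :
    Ham n k v 0 =
      v ^ (2 * (k : ℝ)) - (v ^ (2 * (k : ℝ))) ^ ((n : ℝ) / ((n : ℝ) - 2 * k)) := by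
  rw [Ham, rpow_two_mul_mul_div_sub hv, ← sq_pow_toNat_eq_rpow hk]
  norm_num

theorem one_lt_div_sub_two_mul (hk : (0 : ℝ) < k) (hnk : 2 * (k : ℝ) < n) :
    1 < (n : ℝ) / ((n : ℝ) - 2 * k) := by
  rw [one_lt_div (by linarith)]
  linarith

theorem cylVal_base_pos (hk : (0 : ℝ) < k) (hnk : 2 * (k : ℝ) < n) :
    0 < ((n : ℝ) - 2 * k) / n :=
  div_pos (by linarith) (by linarith)

theorem cylVal_pos (hk : (0 : ℝ) < k) (hnk : 2 * (k : ℝ) < n) : 0 < cylVal n k :=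
  rpow_pos_of_pos (cylVal_base_pos hk hnk) _

theorem cylVal_rpow_two_mul (hk : (0 : ℝ) < k) (hnk : 2 * (k : ℝ) < n) :
    cylVal n k ^ (2 * (k : ℝ)) = (((n : ℝ) - 2 * k) / n) ^ (((n : ℝ) - 2 * k) / (2 * k)) := by
  rw [cylVal, ← rpow_mul (cylVal_base_pos hk hnk).le]
  congr 1
  field_simp
  ring

theorem div_mul_cylVal_rpow_sub_one (hk : (0 : ℝ) < k) (hnk : 2 * (k : ℝ) < n) :
    (n : ℝ) / ((n : ℝ) - 2 * k) *
      (cylVal n k ^ (2 * (k : ℝ))) ^ ((n : ℝ) / ((n : ℝ) - 2 * k) - 1) = 1 := by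
  have hd : (n : ℝ) - 2 * k ≠ 0 := by linarith
  have hn : (n : ℝ) ≠ 0 := by linarith
  have hexp : ((n : ℝ) - 2 * k) / (2 * k) * ((n : ℝ) / ((n : ℝ) - 2 * k) - 1) = 1 := by
    field_simp
    ring
  rw [cylVal_rpow_two_mul hk hnk, ← rpow_mul (cylVal_base_pos hk hnk).le, hexp, rpow_one]
  field_simp

theorem Ham_cylVal_zero (hk : (0 : ℝ) < k) (hnk : 2 * (k : ℝ) < n) :
    Ham n k (cylVal n k) 0 =
      2 * (k : ℝ) / ((n : ℝ) - 2 * k) * (((n : ℝ) - 2 * k) / n) ^ ((n : ℝ) / (2 * k)) := by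
  have hb := cylVal_base_pos hk hnk
  have hd : (n : ℝ) - 2 * k ≠ 0 := by linarith
  have hn : (n : ℝ) ≠ 0 := by linarith
  have hexp₁ : ((n : ℝ) - 2 * k) / (2 * k) = (n : ℝ) / (2 * k) - 1 := by field_simp
  have hexp₂ :
      ((n : ℝ) - 2 * k) / (2 * k) * ((n : ℝ) / ((n : ℝ) - 2 * k)) = (n : ℝ) / (2 * k) := by
    field_simp
  rw [Ham_zero_eq (by exact_mod_cast hk.le) (cylVal_pos hk hnk).le, cylVal_rpow_two_mul hk hnk,
    ← rpow_mul hb.le, hexp₂, hexp₁, rpow_sub_one hb.ne']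
  field_simp
  ring

theorem Ham_zero_lt_Ham_cylVal_zero (hk : (0 : ℝ) < k) (hnk : 2 * (k : ℝ) < n) {v : ℝ}
    (hv : 0 < v) (hne : v ≠ cylVal n k) : Ham n k v 0 < Ham n k (cylVal n k) 0 := by
  have hk₀ : 0 ≤ k := by exact_mod_cast hk.le
  have ha := cylVal_pos hk hnk
  rw [Ham_zero_eq hk₀ hv.le, Ham_zero_eq hk₀ ha.le]
  refine sub_rpow_lt_sub_rpow_of_mul_rpow_sub_one_eq_one (one_lt_div_sub_two_mul hk hnk)
    (rpow_pos_of_pos hv _) (rpow_pos_of_pos ha _) ?_ (div_mul_cylVal_rpow_sub_one hk hnk)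
  rwa [Ne, rpow_left_inj hv.le ha.le (by positivity)]

theorem delaunayODE_const_cylVal (hk : (0 : ℝ) < k) (hnk : 2 * (k : ℝ) < n) :
    DelaunayODE n k (fun _ => cylVal n k) := by
  intro t
  have hk₀ : 0 ≤ k := by exact_mod_cast hk.le
  have hk₁ : 1 ≤ k.toNat := by
    have : 0 < k := by exact_mod_cast hk
    omega
  have ha := cylVal_pos hk hnk
  set u := cylVal n k ^ (2 * (k : ℝ))
  have hu : 0 < u := rpow_pos_of_pos ha _
  simp only [deriv_const', deriv_const, mul_zero, sub_zero, ne_eq, OfNat.ofNat_ne_zero,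
    not_false_eq_true, zero_pow]
  -- for a constant solution the ODE is the critical-point equation `p·u^{p−1} = 1`, `u = v^{2k}`
  refine mul_right_cancel₀ ha.ne' ?_
  calc (cylVal n k ^ 2) ^ (k.toNat - 1) * cylVal n k * cylVal n k
      = (cylVal n k ^ 2) ^ k.toNat := by
        rw [mul_assoc, ← sq, ← pow_succ, Nat.sub_add_cancel hk₁]
    _ = u := sq_pow_toNat_eq_rpow hk₀ _
    _ = (n : ℝ) / ((n : ℝ) - 2 * k) * u ^ ((n : ℝ) / ((n : ℝ) - 2 * k) - 1) * u := by
      rw [div_mul_cylVal_rpow_sub_one hk hnk, one_mul]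
    _ = (n : ℝ) / ((n : ℝ) - 2 * k) * cylVal n k ^ (2 * (k : ℝ) * n / ((n : ℝ) - 2 * k) - 1) *
        cylVal n k := by
      rw [mul_assoc, mul_assoc, rpow_sub_one hu.ne', rpow_sub_one ha.ne',
        div_mul_cancel₀ _ hu.ne', div_mul_cancel₀ _ ha.ne', rpow_two_mul_mul_div_sub ha.le]

end Delaunay

theorem cylindrical_solution_max_energy
    (n k : ℤ) (hk : 0 < k) (hnk : 2 * k < n) (H₀ : ℝ)
    (hH₀ : H₀ = 2 * (k : ℝ) / ((n : ℝ) - 2 * k) *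
      (((n : ℝ) - 2 * k) / n) ^ ((n : ℝ) / (2 * k))) :
    ContDiff ℝ 2 (fun _ : ℝ => cylVal n k) ∧
    0 < cylVal n k ∧
    DelaunayODE n k (fun _ : ℝ => cylVal n k) ∧
    (∀ t : ℝ,
      Ham n k ((fun _ : ℝ => cylVal n k) t)
        (deriv (fun _ : ℝ => cylVal n k) t) = H₀) ∧
    ∀ w : ℝ → ℝ, ContDiff ℝ 2 w → (∀ t : ℝ, 0 < w t) →
      (∀ t : ℝ,
        0 ≤ w t ^ 2 - (2 * (k : ℝ) / ((n : ℝ) - 2 * k)) ^ 2 * deriv w t ^ 2) →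
      DelaunayODE n k w →
      (∀ t : ℝ, Ham n k (w t) (deriv w t) = H₀) →
      ∀ t : ℝ, w t = cylVal n k := by
  have hk' : (0 : ℝ) < k := by exact_mod_cast hk
  have hnk' : 2 * (k : ℝ) < n := by exact_mod_cast hnk
  have hmax : Ham n k (cylVal n k) 0 = H₀ := by rw [Ham_cylVal_zero hk' hnk', hH₀]
  refine ⟨contDiff_const, cylVal_pos hk' hnk', delaunayODE_const_cylVal hk' hnk',
    fun t => by rw [deriv_const, hmax], ?_⟩
  intro w _ hw hw' _ hH t
  by_contra hne
  have hlt := (Ham_le_Ham_zero (hw' t)).trans_lt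
    (Ham_zero_lt_Ham_cylVal_zero hk' hnk' (hw t) hne)
  rw [hH t, hmax] at hlt
  exact lt_irrefl _ hlt
end

section
/- Let n and k be integers with 0 < k and 2k < n. Suppose v : ℝ → ℝ is twice continuously differentiable, v(t) > 0 for all t, v solves the Delaunay ODE at every t ∈ ℝ, H(v(t), v'(t)) > 0 for all t ∈ ℝ, and v'(t₀) = 0 for some t₀ ∈ ℝ. Then h(t) := v(t)² − (2k/(n−2k))² v'(t)² > 0 for all t ∈ ℝ. -/
open Real

theorem Continuous.forall_pos_of_ne_zero {X α : Type*} [TopologicalSpace X] [PreconnectedSpace X]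
    [LinearOrder α] [TopologicalSpace α] [OrderClosedTopology α] [Zero α] {f : X → α}
    (hf : Continuous f) (hne : ∀ x, f x ≠ 0) {x₀ : X} (h₀ : 0 < f x₀) : ∀ x, 0 < f x := by
  intro x
  by_contra! hx
  obtain ⟨c, hc⟩ := intermediate_value_univ x x₀ hf ⟨hx, h₀.le⟩
  exact hne c hc

theorem ne_zero_of_ham_pos {n k : ℤ} (hk : 0 < k) {v w : ℝ} (hv : 0 < v)
    (hH : 0 < Ham n k v w) :
    v ^ 2 - (2 * (k : ℝ) / ((n : ℝ) - 2 * k)) ^ 2 * w ^ 2 ≠ 0 := by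
  intro h0
  rw [Ham, h0, zero_pow (by omega)] at hH
  linarith [rpow_pos_of_pos hv (2 * (k : ℝ) * n / ((n : ℝ) - 2 * k))]

theorem h_positive_of_positive_energy_general
    (n k : ℤ) (hk : 0 < k) (v : ℝ → ℝ)
    (hv : ContDiff ℝ 2 v)
    (hpos : ∀ t : ℝ, 0 < v t)
    (hH : ∀ t : ℝ, 0 < Ham n k (v t) (deriv v t))
    (t₀ : ℝ) (ht₀ : deriv v t₀ = 0) :
    ∀ t : ℝ,
      0 < v t ^ 2 - (2 * (k : ℝ) / ((n : ℝ) - 2 * k)) ^ 2 * deriv v t ^ 2 := by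
  have hcont :
      Continuous fun t => v t ^ 2 - (2 * (k : ℝ) / ((n : ℝ) - 2 * k)) ^ 2 * deriv v t ^ 2 :=
    (hv.continuous.pow 2).sub (continuous_const.mul ((hv.continuous_deriv (by norm_num)).pow 2))
  refine hcont.forall_pos_of_ne_zero (x₀ := t₀)
    (fun t => ne_zero_of_ham_pos hk (hpos t) (hH t)) ?_
  simpa [ht₀] using pow_pos (hpos t₀) 2

theorem h_positive_of_positive_energy
    (n k : ℤ) (hk : 0 < k) (hnk : 2 * k < n) (v : ℝ → ℝ)
    (hv : ContDiff ℝ 2 v)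
    (hpos : ∀ t : ℝ, 0 < v t)
    (hode : DelaunayODE n k v)
    (hH : ∀ t : ℝ, 0 < Ham n k (v t) (deriv v t))
    (t₀ : ℝ) (ht₀ : deriv v t₀ = 0) :
    ∀ t : ℝ,
      0 < v t ^ 2 - (2 * (k : ℝ) / ((n : ℝ) - 2 * k)) ^ 2 * deriv v t ^ 2 :=
  h_positive_of_positive_energy_general n k hk v hv hpos hH t₀ ht₀
end

section
/- Let n and k be integers with 0 < k and 2k < n. Suppose v : ℝ → ℝ is twice continuously differentiable, 0 < v(t) ≤ 1 for all t, v solves the Delaunay ODE at every t ∈ ℝ, v(t)² − (2k/(n−2k))² v'(t)² > 0 for all t, and H(v(t), v'(t)) ≥ 0 for all t. Then for every t ∈ ℝ one has |v'(t)| ≤ ((n−2k)/(2k)) · v(t) and |v''(t)| ≤ ((n−2k)(2n−2k)/(4k²)) · v(t). -/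
open Real

/-! Write `a = 2k/(n−2k)`, `E = 2kn/(n−2k)` and `Q = v² − a² v'²`. Positivity of `Q` gives
`a |v'| < v` at once. Nonnegativity of the Hamiltonian says `v^E ≤ Q^k`, and since `0 < v ≤ 1`
and `E ≥ 2k` this yields `v^(E−1) ≤ Q^(k−1) v`; inserted in the Delaunay ODE it traps
`v − a² v''` between `0` and `(n/(n−2k)) v`, which bounds `|v''|`. -/

lemma mul_abs_lt_of_sq_sub_mul_sq_pos {a V W : ℝ} (ha : 0 ≤ a) (hV : 0 ≤ V)
    (h : 0 < V ^ 2 - a ^ 2 * W ^ 2) : a * |W| < V := by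
  have : |a * W| < |V| := sq_lt_sq.mp (by rw [mul_pow]; linarith)
  rwa [abs_mul, abs_of_nonneg ha, abs_of_nonneg hV] at this

lemma rpow_sub_one_le_pow_pred_mul {V Q E : ℝ} {m : ℕ} (hm : m ≠ 0) (hV : 0 < V) (hV1 : V ≤ 1)
    (hQ : 0 ≤ Q) (hE : 2 * m ≤ E) (h : V ^ E ≤ Q ^ m) : V ^ (E - 1) ≤ Q ^ (m - 1) * V := by
  have hm0 : (0 : ℝ) < m := by exact_mod_cast Nat.pos_of_ne_zero hm
  set x := V ^ (E / m) with hx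
  have hxm : x ^ m = V ^ E := by
    rw [hx, ← rpow_natCast, ← rpow_mul hV.le, div_mul_cancel₀ _ hm0.ne']
  have hxQ : x ≤ Q := le_of_pow_le_pow_left₀ hm hQ (hxm ▸ h)
  have hsplit : V ^ (E - 1) = x ^ (m - 1) * V ^ (E / m - 1) := by
    rw [hx, ← rpow_natCast, ← rpow_mul hV.le, ← rpow_add hV, Nat.cast_pred (Nat.pos_of_ne_zero hm)]
    congr 1
    field_simp
    ring
  have htail : V ^ (E / m - 1) ≤ V := by
    refine (rpow_le_rpow_of_exponent_ge hV hV1 ?_).trans_eq (rpow_one V)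
    rw [le_sub_iff_add_le, le_div_iff₀ hm0]
    linarith
  rw [hsplit]
  exact mul_le_mul (pow_le_pow_left₀ (rpow_nonneg hV.le _) hxQ _) htail
    (rpow_nonneg hV.le _) (pow_nonneg hQ _)

lemma abs_mul_le_of_mul_sub_eq {P V X b U c : ℝ} (hP : 0 < P) (hc : 0 ≤ c) (hX : 0 ≤ X)
    (hXV : X ≤ P * V) (h : P * (V - b * U) = c * X) : |b * U| ≤ (1 + c) * V := by
  have hV : 0 ≤ V := nonneg_of_mul_nonneg_right (hX.trans hXV) hP
  have hlow : 0 ≤ P * (V - b * U) := h ▸ mul_nonneg hc hX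
  have hup : P * (V - b * U) ≤ P * (c * V) := by
    rw [h, mul_left_comm]
    exact mul_le_mul_of_nonneg_left hXV hc
  have hlow' := nonneg_of_mul_nonneg_right hlow hP
  have hup' := le_of_mul_le_mul_left hup hP
  rw [abs_le]
  constructor <;> nlinarith

theorem deriv_bounds_of_solution_general
    (n k : ℤ) (hk : 0 < k) (hnk : 2 * k < n) (v : ℝ → ℝ)
    (hpos : ∀ t : ℝ, 0 < v t) (hle : ∀ t : ℝ, v t ≤ 1)
    (hode : DelaunayODE n k v)
    (hh : ∀ t : ℝ,
      0 < v t ^ 2 - (2 * (k : ℝ) / ((n : ℝ) - 2 * k)) ^ 2 * deriv v t ^ 2)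
    (hH : ∀ t : ℝ, 0 ≤ Ham n k (v t) (deriv v t)) :
    ∀ t : ℝ,
      |deriv v t| ≤ ((n : ℝ) - 2 * k) / (2 * k) * v t ∧
      |deriv (deriv v) t| ≤
        ((n : ℝ) - 2 * k) * (2 * (n : ℝ) - 2 * k) / (4 * (k : ℝ) ^ 2) * v t := by
  intro t
  have hk0 : (0 : ℝ) < k := by exact_mod_cast hk
  have hd : (0 : ℝ) < n - 2 * k := by
    rw [sub_pos]; exact_mod_cast hnk
  have hmk : ((k.toNat : ℕ) : ℝ) = k := by exact_mod_cast Int.toNat_of_nonneg hk.le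
  have ha : 0 < 2 * (k : ℝ) / (n - 2 * k) := by positivity
  have hV := hpos t
  have hderiv := mul_abs_lt_of_sq_sub_mul_sq_pos ha.le hV.le (hh t)
  have hpow_le := rpow_sub_one_le_pow_pred_mul (by omega) hV (hle t) (hh t).le
    (by rw [hmk, le_div_iff₀ hd]; nlinarith) (sub_nonneg.mp (hH t))
  have hderiv2 := abs_mul_le_of_mul_sub_eq (pow_pos (hh t) _) (div_pos (by linarith) hd).le
    (by positivity) hpow_le (hode t)
  rw [abs_mul, abs_of_pos (by positivity)] at hderiv2
  constructor
  · rw [← lt_div_iff₀' ha] at hderiv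
    exact hderiv.le.trans_eq (by field_simp)
  · -- `(2k/(n−2k))² · (n−2k)(2n−2k)/(4k²) = 1 + n/(n−2k)`
    rw [← le_div_iff₀' (by positivity)] at hderiv2
    exact hderiv2.trans_eq (by field_simp; ring)

theorem deriv_bounds_of_solution
    (n k : ℤ) (hk : 0 < k) (hnk : 2 * k < n) (v : ℝ → ℝ)
    (hv : ContDiff ℝ 2 v)
    (hpos : ∀ t : ℝ, 0 < v t) (hle : ∀ t : ℝ, v t ≤ 1)
    (hode : DelaunayODE n k v)
    (hh : ∀ t : ℝ,
      0 < v t ^ 2 - (2 * (k : ℝ) / ((n : ℝ) - 2 * k)) ^ 2 * deriv v t ^ 2)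
    (hH : ∀ t : ℝ, 0 ≤ Ham n k (v t) (deriv v t)) :
    ∀ t : ℝ,
      |deriv v t| ≤ ((n : ℝ) - 2 * k) / (2 * k) * v t ∧
      |deriv (deriv v) t| ≤
        ((n : ℝ) - 2 * k) * (2 * (n : ℝ) - 2 * k) / (4 * (k : ℝ) ^ 2) * v t :=
  deriv_bounds_of_solution_general n k hk hnk v hpos hle hode hh hH
end

section
/- Let n and k be integers with 0 < k and 2k < n, let ε ∈ (0, ((n−2k)/n)^(1/(2k))), and let v be a Delaunay solution with necksize ε. Then for every t ∈ ℝ: (i) v'(t)² ≤ ((n−2k)/(2k))² · (v(t)² − ε^((n−2k)/k)), and (ii) v(t) ≤ ε^((n−2k)/(2k)) · cosh(((n−2k)/(2k)) t) ≤ ε^((n−2k)/(2k)) · exp(((n−2k)/(2k)) |t|). -/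
/-!
The Hamiltonian `Ham` is conserved along solutions of the Delaunay ODE. At `t = 0` we have
`v' = 0` and `v = v₀ := ε ^ ((n - 2k) / (2k))`, the minimum of `v`, so with `a = 2k / (n - 2k)`
the quantity `x = v² - a² v'²` satisfies `x ^ k ≥ v₀ ^ (2k)`; as `x` is continuous with
`x 0 = v₀² > 0`, it never vanishes, hence `x ≥ v₀²`, which is (i). The ODE then forces
`v - a² v'' > 0`, i.e. `v'' < c² v` with `c = 1 / a`, and a Sturm comparison with `v₀ cosh (c t)`,
the solution of `u'' = c² u` with the same initial data, gives (ii).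
-/

open Real

/-- A Delaunay solution with necksize `ε`. -/
def IsDelaunay (n k : ℤ) (ε : ℝ) (v : ℝ → ℝ) : Prop :=
  ContDiff ℝ 2 v ∧ DelaunayODE n k v ∧ deriv v 0 = 0 ∧
    v 0 = ε ^ (((n : ℝ) - 2 * k) / (2 * k)) ∧
    ∀ t : ℝ, ε ^ (((n : ℝ) - 2 * k) / (2 * k)) ≤ v t ∧ v t ≤ 1

lemma cosh_le_exp_abs (x : ℝ) : cosh x ≤ exp |x| := by
  rw [← cosh_abs, cosh_eq]
  linarith [exp_le_exp.2 (neg_le_self (abs_nonneg x))]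

lemma apply_le_apply_zero_of_mul_deriv_nonpos {f f' : ℝ → ℝ} (hf : ∀ t, HasDerivAt f (f' t) t)
    (hf' : ∀ t, t * f' t ≤ 0) (t : ℝ) : f t ≤ f 0 := by
  have hcont : Continuous f := continuous_iff_continuousAt.2 fun t ↦ (hf t).continuousAt
  rcases le_total 0 t with ht | ht
  · refine antitoneOn_of_hasDerivWithinAt_nonpos (convex_Ici 0) hcont.continuousOn
      (fun x _ ↦ (hf x).hasDerivWithinAt) (fun x hx ↦ ?_) Set.self_mem_Ici ht ht
    rw [interior_Ici] at hx
    exact nonpos_of_mul_nonpos_right (hf' x) hx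
  · refine monotoneOn_of_hasDerivWithinAt_nonneg (convex_Iic 0) hcont.continuousOn
      (fun x _ ↦ (hf x).hasDerivWithinAt) (fun x hx ↦ ?_) ht Set.self_mem_Iic ht
    rw [interior_Iic] at hx
    exact nonneg_of_mul_nonpos_right (hf' x) hx

theorem le_mul_cosh_of_deriv_deriv_le {u u' u'' : ℝ → ℝ} {A c : ℝ}
    (hu : ∀ t, HasDerivAt u (u' t) t) (hu' : ∀ t, HasDerivAt u' (u'' t) t)
    (hineq : ∀ t, u'' t ≤ c ^ 2 * u t) (h0 : u 0 ≤ A) (h0' : u' 0 = 0) (t : ℝ) :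
    u t ≤ A * cosh (c * t) := by
  have hcosh (t : ℝ) : HasDerivAt (fun s ↦ cosh (c * s)) (c * sinh (c * t)) t := by
    simpa [mul_comm] using ((hasDerivAt_id t).const_mul c).cosh
  have hsinh (t : ℝ) : HasDerivAt (fun s ↦ sinh (c * s)) (c * cosh (c * t)) t := by
    simpa [mul_comm] using ((hasDerivAt_id t).const_mul c).sinh
  -- `u / cosh (c ·)` has derivative `W / cosh² (c ·)` with `W` the Wronskian of `u` and
  -- `cosh (c ·)`; `W` is antitone and vanishes at `0`, so `u / cosh (c ·)` peaks at `0`.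
  set W : ℝ → ℝ := fun t ↦ u' t * cosh (c * t) - c * u t * sinh (c * t)
  have hW (t : ℝ) : HasDerivAt W ((u'' t - c ^ 2 * u t) * cosh (c * t)) t :=
    (((hu' t).mul (hcosh t)).sub (((hu t).const_mul c).mul (hsinh t))).congr_deriv (by ring)
  have hW_anti : Antitone W :=
    antitone_of_hasDerivAt_nonpos hW fun t ↦
      mul_nonpos_of_nonpos_of_nonneg (by linarith [hineq t]) (cosh_pos _).le
  have hW0 : W 0 = 0 := by simp [W, h0']
  have hq (t : ℝ) : HasDerivAt (fun s ↦ u s / cosh (c * s)) (W t / cosh (c * t) ^ 2) t :=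
    ((hu t).div (hcosh t) (cosh_pos _).ne').congr_deriv (by ring)
  have hq_max := apply_le_apply_zero_of_mul_deriv_nonpos hq (fun t ↦ by
    rw [mul_div_assoc']
    refine div_nonpos_of_nonpos_of_nonneg ?_ (sq_nonneg _)
    rcases le_total 0 t with ht | ht
    · exact mul_nonpos_of_nonneg_of_nonpos ht (hW0 ▸ hW_anti ht)
    · exact mul_nonpos_of_nonpos_of_nonneg ht (hW0 ▸ hW_anti ht)) t
  simp only [mul_zero, cosh_zero, div_one] at hq_max
  rw [div_le_iff₀ (cosh_pos _)] at hq_max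
  exact hq_max.trans (mul_le_mul_of_nonneg_right h0 (cosh_pos _).le)

lemma le_of_pow_le_pow_of_continuous {X : Type*} [TopologicalSpace X] [PreconnectedSpace X]
    {x : X → ℝ} (hx : Continuous x) {b : ℝ} (hb : 0 < b) {K : ℕ} (hK : K ≠ 0) {t₀ : X}
    (ht₀ : 0 < x t₀) (h : ∀ t, b ^ K ≤ x t ^ K) (t : X) : b ≤ x t := by
  have hpos : 0 < x t := by
    by_contra! hneg
    obtain ⟨s, hs⟩ := intermediate_value_univ t t₀ hx ⟨hneg, ht₀.le⟩
    have := h s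
    rw [hs, zero_pow hK] at this
    exact (pow_pos hb K).not_ge this
  exact le_of_pow_le_pow_left₀ hK hpos.le (h t)

section Delaunay

variable {n k : ℤ}

lemma one_le_delaunay_exponent (hk : 0 < k) (hnk : 2 * k < n) :
    1 ≤ 2 * (k : ℝ) * n / ((n : ℝ) - 2 * k) := by
  have hk' : (1 : ℝ) ≤ k := by exact_mod_cast hk
  have hnk' : (2 : ℝ) * k < n := by exact_mod_cast hnk
  rw [one_le_div (by linarith)]
  nlinarith

theorem DelaunayODE.ham_eq_ham_zero (hk : 0 < k) (hnk : 2 * k < n) {v : ℝ → ℝ}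
    (hode : DelaunayODE n k v) (hv : Differentiable ℝ v) (hv' : Differentiable ℝ (deriv v))
    (t : ℝ) : Ham n k (v t) (deriv v t) = Ham n k (v 0) (deriv v 0) := by
  have hK : ((k.toNat : ℕ) : ℝ) = k := by exact_mod_cast Int.toNat_of_nonneg hk.le
  have hderiv (s : ℝ) : HasDerivAt (fun s ↦ Ham n k (v s) (deriv v s)) 0 s := by
    have hx := ((hv s).hasDerivAt.pow 2).sub
      (((hv' s).hasDerivAt.pow 2).const_mul ((2 * (k : ℝ) / ((n : ℝ) - 2 * k)) ^ 2))
    refine ((hx.pow k.toNat).sub ((hv s).hasDerivAt.rpow_const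
      (Or.inr (one_le_delaunay_exponent hk hnk)))).congr_deriv ?_
    rw [hK]
    simp only [Pi.sub_apply, Pi.pow_apply]
    linear_combination (2 * k * deriv v s) * hode s
  exact is_const_of_deriv_eq_zero (fun s ↦ (hderiv s).differentiableAt)
    (fun s ↦ (hderiv s).deriv) t 0

lemma delaunay_sq_mul_sq (hk : 0 < k) (hnk : 2 * k < n) :
    (((n : ℝ) - 2 * k) / (2 * k)) ^ 2 * (2 * (k : ℝ) / ((n : ℝ) - 2 * k)) ^ 2 = 1 := by
  have hk' : (0 : ℝ) < k := by exact_mod_cast hk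
  have hnk' : (2 : ℝ) * k < n := by exact_mod_cast hnk
  rw [← mul_pow, div_mul_div_cancel₀ (by linarith), div_self (by linarith), one_pow]

namespace IsDelaunay

variable {ε : ℝ} {v : ℝ → ℝ}

lemma differentiable (hv : IsDelaunay n k ε v) : Differentiable ℝ v :=
  hv.1.differentiable (by norm_num)

lemma differentiable_deriv (hv : IsDelaunay n k ε v) : Differentiable ℝ (deriv v) := by
  simpa only [iteratedDeriv_one] using hv.1.differentiable_iteratedDeriv 1 (by norm_num)

lemma rpow_le_sq_sub_deriv_sq (hk : 0 < k) (hnk : 2 * k < n) (hε : 0 < ε) (hv : IsDelaunay n k ε v)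
    (t : ℝ) : ε ^ (((n : ℝ) - 2 * k) / k) ≤
      v t ^ 2 - (2 * (k : ℝ) / ((n : ℝ) - 2 * k)) ^ 2 * deriv v t ^ 2 := by
  have hham := (hv.2.1.ham_eq_ham_zero hk hnk hv.differentiable hv.differentiable_deriv ·)
  have hcont := hv.differentiable.continuous
  have hcont' := hv.differentiable_deriv.continuous
  obtain ⟨-, -, hv'0, hv0, hbd⟩ := hv
  set v₀ := ε ^ (((n : ℝ) - 2 * k) / (2 * k))
  have hv₀ : 0 < v₀ := rpow_pos_of_pos hε _
  have hv₀_sq : v₀ ^ 2 = ε ^ (((n : ℝ) - 2 * k) / k) := by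
    rw [← rpow_natCast, ← rpow_mul hε.le]
    congr 1
    push_cast
    field_simp [show (k : ℝ) ≠ 0 by exact_mod_cast hk.ne']
  rw [← hv₀_sq]
  refine le_of_pow_le_pow_of_continuous
    (x := fun t ↦ v t ^ 2 - (2 * (k : ℝ) / ((n : ℝ) - 2 * k)) ^ 2 * deriv v t ^ 2)
    (K := k.toNat) (t₀ := 0) (by fun_prop) (pow_pos hv₀ 2)
    (by omega) (by simp [hv'0, hv0, hv₀]) (fun s ↦ ?_) t
  have hp := one_le_delaunay_exponent hk hnk
  have hmono : v₀ ^ (2 * (k : ℝ) * n / ((n : ℝ) - 2 * k)) ≤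
      v s ^ (2 * (k : ℝ) * n / ((n : ℝ) - 2 * k)) :=
    rpow_le_rpow hv₀.le (hbd s).1 (by linarith)
  have := hham s
  rw [Ham, Ham, hv'0, hv0, zero_pow two_ne_zero, mul_zero, sub_zero] at this
  linarith

lemma deriv_sq_le (hk : 0 < k) (hnk : 2 * k < n) (hε : 0 < ε) (hv : IsDelaunay n k ε v)
    (t : ℝ) : deriv v t ^ 2 ≤
      (((n : ℝ) - 2 * k) / (2 * k)) ^ 2 * (v t ^ 2 - ε ^ (((n : ℝ) - 2 * k) / k)) := by
  have h := hv.rpow_le_sq_sub_deriv_sq hk hnk hε t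
  have hc := delaunay_sq_mul_sq hk hnk
  nlinarith [sq_nonneg (((n : ℝ) - 2 * k) / (2 * k))]

lemma deriv_deriv_lt (hk : 0 < k) (hnk : 2 * k < n) (hε : 0 < ε) (hv : IsDelaunay n k ε v)
    (t : ℝ) : deriv (deriv v) t < (((n : ℝ) - 2 * k) / (2 * k)) ^ 2 * v t := by
  have hk' : (0 : ℝ) < k := by exact_mod_cast hk
  have hnk' : (2 : ℝ) * k < n := by exact_mod_cast hnk
  have hvt : 0 < v t := (rpow_pos_of_pos hε _).trans_le (hv.2.2.2.2 t).1
  have hx : 0 < v t ^ 2 - (2 * (k : ℝ) / ((n : ℝ) - 2 * k)) ^ 2 * deriv v t ^ 2 :=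
    (rpow_pos_of_pos hε _).trans_le (hv.rpow_le_sq_sub_deriv_sq hk hnk hε t)
  have hrhs : 0 < (n : ℝ) / ((n : ℝ) - 2 * k) * v t ^ (2 * (k : ℝ) * n / ((n : ℝ) - 2 * k) - 1) :=
    mul_pos (div_pos (by linarith) (by linarith)) (rpow_pos_of_pos hvt _)
  rw [← hv.2.1 t] at hrhs
  have h := pos_of_mul_pos_right hrhs (pow_pos hx _).le
  have hc := delaunay_sq_mul_sq hk hnk
  nlinarith [sq_nonneg (((n : ℝ) - 2 * k) / (2 * k))]

lemma le_mul_cosh (hk : 0 < k) (hnk : 2 * k < n) (hε : 0 < ε) (hv : IsDelaunay n k ε v)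
    (t : ℝ) : v t ≤ ε ^ (((n : ℝ) - 2 * k) / (2 * k)) * cosh (((n : ℝ) - 2 * k) / (2 * k) * t) :=
  le_mul_cosh_of_deriv_deriv_le (fun t ↦ (hv.differentiable t).hasDerivAt)
    (fun t ↦ (hv.differentiable_deriv t).hasDerivAt) (fun t ↦ (hv.deriv_deriv_lt hk hnk hε t).le)
    hv.2.2.2.1.le hv.2.2.1 t

end IsDelaunay

end Delaunay

theorem delaunay_basic_estimates_general
    (n k : ℤ) (hk : 0 < k) (hnk : 2 * k < n) (ε : ℝ)
    (hε : 0 < ε)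
    (v : ℝ → ℝ) (hv : IsDelaunay n k ε v) :
    ∀ t : ℝ,
      deriv v t ^ 2 ≤
        (((n : ℝ) - 2 * k) / (2 * k)) ^ 2 *
          (v t ^ 2 - ε ^ (((n : ℝ) - 2 * k) / k)) ∧
      v t ≤ ε ^ (((n : ℝ) - 2 * k) / (2 * k)) *
          Real.cosh (((n : ℝ) - 2 * k) / (2 * k) * t) ∧
      ε ^ (((n : ℝ) - 2 * k) / (2 * k)) *
          Real.cosh (((n : ℝ) - 2 * k) / (2 * k) * t) ≤
        ε ^ (((n : ℝ) - 2 * k) / (2 * k)) *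
          Real.exp (((n : ℝ) - 2 * k) / (2 * k) * |t|) := by
  intro t
  have hk' : (0 : ℝ) < k := by exact_mod_cast hk
  have hnk' : (2 : ℝ) * k < n := by exact_mod_cast hnk
  have hc : 0 ≤ ((n : ℝ) - 2 * k) / (2 * k) := div_nonneg (by linarith) (by linarith)
  refine ⟨hv.deriv_sq_le hk hnk hε t, hv.le_mul_cosh hk hnk hε t, ?_⟩
  gcongr
  simpa only [abs_mul, abs_of_nonneg hc] using cosh_le_exp_abs (((n : ℝ) - 2 * k) / (2 * k) * t)

theorem delaunay_basic_estimates
    (n k : ℤ) (hk : 0 < k) (hnk : 2 * k < n) (ε : ℝ)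
    (hε : 0 < ε) (hε' : ε < (((n : ℝ) - 2 * k) / n) ^ (1 / (2 * (k : ℝ))))
    (v : ℝ → ℝ) (hv : IsDelaunay n k ε v) :
    ∀ t : ℝ,
      deriv v t ^ 2 ≤
        (((n : ℝ) - 2 * k) / (2 * k)) ^ 2 *
          (v t ^ 2 - ε ^ (((n : ℝ) - 2 * k) / k)) ∧
      v t ≤ ε ^ (((n : ℝ) - 2 * k) / (2 * k)) *
          Real.cosh (((n : ℝ) - 2 * k) / (2 * k) * t) ∧
      ε ^ (((n : ℝ) - 2 * k) / (2 * k)) *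
          Real.cosh (((n : ℝ) - 2 * k) / (2 * k) * t) ≤
        ε ^ (((n : ℝ) - 2 * k) / (2 * k)) *
          Real.exp (((n : ℝ) - 2 * k) / (2 * k) * |t|) :=
  delaunay_basic_estimates_general n k hk hnk ε hε v hv
end

section
/- Let n and k be integers with 0 < k and 2k < n, let ε ∈ (0, ((n−2k)/n)^(1/(2k))), and let v be a Delaunay solution with necksize ε. Then for every t ∈ ℝ one has h(t) := v(t)² − (2k/(n−2k))² v'(t)² > 0 and v(t)^((2kn/(n−2k)) − 1) · h(t)^(1−k) ≤ ε^((n+2k)/(2k)) · exp(((n+2k)/(2k)) |t|), where h(t)^(1−k) denotes the real power of the positive number h(t) with exponent 1−k. -/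
open Real

/-! The Hamiltonian `H(v, v')` is conserved along the Delaunay ODE, and at the neck `t = 0` it
equals `v(0)^(2k) - v(0)^q ≥ 0`, where `q = 2kn/(n-2k) ≥ 2k` and `v(0) ≤ 1`. Hence
`h^k ≥ v^q > 0`, so the continuous function `h` never vanishes and, being `v(0)² > 0` at the
neck, stays positive. This gives `h ≥ v^(q/k)`, whence
`v^(q-1) h^(1-k) ≤ v^(q/k - 1) = v^((n+2k)/(n-2k))`, and `|v'| ≤ ((n-2k)/(2k)) v`, which makes
`log v` Lipschitz and so `v(t) ≤ v(0) e^((n-2k)|t|/(2k))`. -/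
theorem Continuous.pos_of_forall_ne_zero {X : Type*} [TopologicalSpace X] [PreconnectedSpace X]
    {f : X → ℝ} (hf : Continuous f) (hne : ∀ x, f x ≠ 0) {a : X} (ha : 0 < f a) (x : X) :
    0 < f x := by
  by_contra! hx
  obtain ⟨c, hc⟩ := intermediate_value_univ x a hf ⟨hx, ha.le⟩
  exact hne c hc

theorem le_mul_exp_mul_abs_sub_of_abs_deriv_le {u u' : ℝ → ℝ} {c : ℝ}
    (hu : ∀ t, HasDerivAt u (u' t) t) (hpos : ∀ t, 0 < u t) (hbound : ∀ t, |u' t| ≤ c * u t)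
    (a b : ℝ) : u b ≤ u a * exp (c * |b - a|) := by
  have hlog : ∀ t, HasDerivAt (fun s => log (u s)) (u' t / u t) t :=
    fun t => (hu t).log (hpos t).ne'
  have hlog_bound : ∀ t, ‖u' t / u t‖ ≤ c := fun t => by
    rw [Real.norm_eq_abs, abs_div, abs_of_pos (hpos t), div_le_iff₀ (hpos t)]
    exact hbound t
  have hlip : |log (u b) - log (u a)| ≤ c * |b - a| :=
    convex_univ.norm_image_sub_le_of_norm_hasDerivWithin_le (fun t _ => (hlog t).hasDerivWithinAt)
      (fun t _ => hlog_bound t) (Set.mem_univ a) (Set.mem_univ b)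
  calc u b = exp (log (u b)) := (exp_log (hpos b)).symm
    _ ≤ exp (log (u a) + c * |b - a|) :=
        exp_le_exp.2 (by linarith [le_abs_self (log (u b) - log (u a))])
    _ = u a * exp (c * |b - a|) := by rw [exp_add, exp_log (hpos a)]

theorem abs_le_inv_mul_of_sq_sub_sq_pos {c x y : ℝ} (hc : 0 < c) (hx : 0 ≤ x)
    (h : 0 < x ^ 2 - c ^ 2 * y ^ 2) : |y| ≤ c⁻¹ * x := by
  have hcy : |c * y| ≤ x := abs_le_of_sq_le_sq (by linarith [mul_pow c y 2]) hx
  rw [abs_mul, abs_of_pos hc] at hcy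
  rwa [le_inv_mul_iff₀ hc]

theorem rpow_sub_one_mul_rpow_one_sub_le {x y q κ : ℝ} (hx : 0 < x) (hκ : 1 ≤ κ)
    (hy : x ^ (q / κ) ≤ y) : x ^ (q - 1) * y ^ (1 - κ) ≤ x ^ (q / κ - 1) := by
  have hκ0 : κ ≠ 0 := by positivity
  calc x ^ (q - 1) * y ^ (1 - κ) ≤ x ^ (q - 1) * (x ^ (q / κ)) ^ (1 - κ) :=
        mul_le_mul_of_nonneg_left
          (rpow_le_rpow_of_nonpos (rpow_pos_of_pos hx _) hy (by linarith)) (rpow_nonneg hx.le _)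
    _ = x ^ (q / κ - 1) := by
        rw [← rpow_mul hx.le, ← rpow_add hx]
        congr 1
        field_simp
        ring

theorem rpow_div_natCast_le_of_rpow_le_pow {x y p : ℝ} {m : ℕ} (hm : m ≠ 0) (hx : 0 ≤ x)
    (hy : 0 ≤ y) (h : x ^ p ≤ y ^ m) : x ^ (p / m) ≤ y := by
  rw [div_eq_mul_inv, rpow_mul hx, ← pow_rpow_inv_natCast hy hm]
  exact rpow_le_rpow (rpow_nonneg hx p) h (by positivity)

section Hamiltonian

variable {n k : ℤ} {v : ℝ → ℝ}

theorem hasDerivAt_ham_of_delaunayODE (hk : 0 ≤ k) (hv : ContDiff ℝ 2 v)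
    (hode : DelaunayODE n k v) {t : ℝ} (ht : v t ≠ 0) :
    HasDerivAt (fun s => Ham n k (v s) (deriv v s)) 0 t := by
  set A : ℝ := (2 * (k : ℝ) / ((n : ℝ) - 2 * k)) ^ 2
  set q : ℝ := 2 * (k : ℝ) * n / ((n : ℝ) - 2 * k)
  have hK : ((k.toNat : ℕ) : ℝ) = k := by exact_mod_cast Int.toNat_of_nonneg hk
  obtain ⟨hv1, -, hw1⟩ := contDiff_succ_iff_deriv.mp (show ContDiff ℝ (1 + 1) v from hv)
  have hvd : HasDerivAt v (deriv v t) t := (hv1 t).hasDerivAt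
  have hwd : HasDerivAt (deriv v) (deriv (deriv v) t) t :=
    (hw1.differentiable one_ne_zero t).hasDerivAt
  have hform : HasDerivAt (fun s => v s ^ 2 - A * deriv v s ^ 2)
      (2 * deriv v t * (v t - A * deriv (deriv v) t)) t :=
    ((hvd.pow 2).sub ((hwd.pow 2).const_mul A)).congr_deriv (by push_cast; ring)
  have hrpow : HasDerivAt (fun s => v s ^ q) (q * v t ^ (q - 1) * deriv v t) t :=
    ((hasDerivAt_rpow_const (Or.inl ht)).comp t hvd).congr_deriv (by ring)
  refine ((hform.pow k.toNat).sub hrpow).congr_deriv ?_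
  calc (k.toNat : ℝ) * (v t ^ 2 - A * deriv v t ^ 2) ^ (k.toNat - 1) *
          (2 * deriv v t * (v t - A * deriv (deriv v) t)) - q * v t ^ (q - 1) * deriv v t
      = 2 * deriv v t * k * ((v t ^ 2 - A * deriv v t ^ 2) ^ (k.toNat - 1) *
          (v t - A * deriv (deriv v) t)) - q * v t ^ (q - 1) * deriv v t := by rw [hK]; ring
    _ = 0 := by rw [hode t]; ring

theorem ham_eq_of_delaunayODE (hk : 0 ≤ k) (hv : ContDiff ℝ 2 v) (hode : DelaunayODE n k v)
    (hne : ∀ t, v t ≠ 0) (s t : ℝ) :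
    Ham n k (v s) (deriv v s) = Ham n k (v t) (deriv v t) :=
  is_const_of_deriv_eq_zero
    (fun t => (hasDerivAt_ham_of_delaunayODE hk hv hode (hne t)).differentiableAt)
    (fun t => (hasDerivAt_ham_of_delaunayODE hk hv hode (hne t)).deriv) s t

theorem ham_zero_nonneg (hk : 0 ≤ k) (hnk : 2 * k < n) {x : ℝ} (hx0 : 0 < x) (hx1 : x ≤ 1) :
    0 ≤ Ham n k x 0 := by
  have hkR : (0 : ℝ) ≤ k := by exact_mod_cast hk
  have hnkR : (0 : ℝ) < n - 2 * k := by
    have : (2 * k : ℝ) < n := by exact_mod_cast hnk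
    linarith
  have hK : ((k.toNat : ℕ) : ℝ) = k := by exact_mod_cast Int.toNat_of_nonneg hk
  have hpow : (x ^ 2 - (2 * (k : ℝ) / ((n : ℝ) - 2 * k)) ^ 2 * 0 ^ 2) ^ k.toNat
      = x ^ (2 * (k : ℝ)) := by
    rw [zero_pow two_ne_zero, mul_zero, sub_zero, ← pow_mul, ← rpow_natCast]
    push_cast [hK]
    ring_nf
  have hexp : 2 * (k : ℝ) ≤ 2 * k * n / (n - 2 * k) := by
    rw [le_div_iff₀ hnkR]
    nlinarith
  unfold Ham
  rw [hpow, sub_nonneg]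
  exact rpow_le_rpow_of_exponent_ge hx0 hx1 hexp

end Hamiltonian

namespace IsDelaunay

variable {n k : ℤ} {ε : ℝ} {v : ℝ → ℝ}

theorem pos (hε : 0 < ε) (hv : IsDelaunay n k ε v) (t : ℝ) : 0 < v t :=
  (rpow_pos_of_pos hε _).trans_le (hv.2.2.2.2 t).1

/-- Conservation of the Hamiltonian, whose value at the neck is nonnegative. -/
theorem rpow_le_sq_sub_sq_pow (hk : 0 ≤ k) (hnk : 2 * k < n) (hε : 0 < ε)
    (hv : IsDelaunay n k ε v) (t : ℝ) :
    v t ^ (2 * (k : ℝ) * n / ((n : ℝ) - 2 * k)) ≤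
      (v t ^ 2 - (2 * (k : ℝ) / ((n : ℝ) - 2 * k)) ^ 2 * deriv v t ^ 2) ^ k.toNat := by
  have hpos := hv.pos hε
  obtain ⟨hreg, hode, hw0, -, hbounds⟩ := hv
  have hham : 0 ≤ Ham n k (v t) (deriv v t) := by
    rw [ham_eq_of_delaunayODE hk hreg hode (fun s => (hpos s).ne') t 0, hw0]
    exact ham_zero_nonneg hk hnk (hpos 0) (hbounds 0).2
  exact sub_nonneg.mp hham

theorem sq_sub_sq_pos (hk : 0 < k) (hnk : 2 * k < n) (hε : 0 < ε) (hv : IsDelaunay n k ε v)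
    (t : ℝ) : 0 < v t ^ 2 - (2 * (k : ℝ) / ((n : ℝ) - 2 * k)) ^ 2 * deriv v t ^ 2 := by
  have hcont :
      Continuous fun s => v s ^ 2 - (2 * (k : ℝ) / ((n : ℝ) - 2 * k)) ^ 2 * deriv v s ^ 2 :=
    (hv.1.continuous.pow 2).sub (continuous_const.mul ((hv.1.continuous_deriv one_le_two).pow 2))
  refine hcont.pos_of_forall_ne_zero (fun s hs => ?_) (a := 0) ?_ t
  · have hle := hv.rpow_le_sq_sub_sq_pow hk.le hnk hε s
    rw [hs, zero_pow (by omega)] at hle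
    exact (rpow_pos_of_pos (hv.pos hε s) _).not_ge hle
  · simpa [hv.2.2.1] using pow_pos (hv.pos hε 0) 2

theorem abs_deriv_le (hk : 0 < k) (hnk : 2 * k < n) (hε : 0 < ε) (hv : IsDelaunay n k ε v)
    (t : ℝ) : |deriv v t| ≤ ((n : ℝ) - 2 * k) / (2 * k) * v t := by
  have hkR : (0 : ℝ) < k := by exact_mod_cast hk
  have hnkR : (2 * k : ℝ) < n := by exact_mod_cast hnk
  rw [← inv_div]
  exact abs_le_inv_mul_of_sq_sub_sq_pos (div_pos (by linarith) (by linarith)) (hv.pos hε t).le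
    (hv.sq_sub_sq_pos hk hnk hε t)

theorem le_rpow_mul_exp (hk : 0 < k) (hnk : 2 * k < n) (hε : 0 < ε) (hv : IsDelaunay n k ε v)
    (t : ℝ) :
    v t ≤ ε ^ (((n : ℝ) - 2 * k) / (2 * k)) * exp (((n : ℝ) - 2 * k) / (2 * k) * |t|) := by
  have hd : ∀ s, HasDerivAt v (deriv v s) s :=
    fun s => (hv.1.differentiable two_ne_zero s).hasDerivAt
  simpa [hv.2.2.2.1] using
    le_mul_exp_mul_abs_sub_of_abs_deriv_le hd (hv.pos hε) (hv.abs_deriv_le hk hnk hε) 0 t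

theorem rpow_div_le_sq_sub_sq (hk : 0 < k) (hnk : 2 * k < n) (hε : 0 < ε)
    (hv : IsDelaunay n k ε v) (t : ℝ) :
    v t ^ (2 * (k : ℝ) * n / ((n : ℝ) - 2 * k) / k) ≤
      v t ^ 2 - (2 * (k : ℝ) / ((n : ℝ) - 2 * k)) ^ 2 * deriv v t ^ 2 := by
  have hK : ((k.toNat : ℕ) : ℝ) = k := by exact_mod_cast Int.toNat_of_nonneg hk.le
  have hle := rpow_div_natCast_le_of_rpow_le_pow (by omega) (hv.pos hε t).le
    (hv.sq_sub_sq_pos hk hnk hε t).le (hv.rpow_le_sq_sub_sq_pow hk.le hnk hε t)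
  rwa [hK] at hle

end IsDelaunay

theorem delaunay_nonlinear_term_estimate_general
    (n k : ℤ) (hk : 0 < k) (hnk : 2 * k < n) (ε : ℝ)
    (hε : 0 < ε)
    (v : ℝ → ℝ) (hv : IsDelaunay n k ε v) :
    ∀ t : ℝ,
      0 < v t ^ 2 - (2 * (k : ℝ) / ((n : ℝ) - 2 * k)) ^ 2 * deriv v t ^ 2 ∧
      v t ^ (2 * (k : ℝ) * n / ((n : ℝ) - 2 * k) - 1) *
          (v t ^ 2 - (2 * (k : ℝ) / ((n : ℝ) - 2 * k)) ^ 2 * deriv v t ^ 2) ^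
            (1 - (k : ℝ)) ≤
        ε ^ (((n : ℝ) + 2 * k) / (2 * k)) *
          Real.exp (((n : ℝ) + 2 * k) / (2 * k) * |t|) := by
  intro t
  have hkR : (1 : ℝ) ≤ k := by exact_mod_cast hk
  have hnkR : (2 * k : ℝ) < n := by exact_mod_cast hnk
  have hm : (0 : ℝ) < n - 2 * k := by linarith
  have hp : (0 : ℝ) < n + 2 * k := by linarith
  have hvt := hv.pos hε t
  refine ⟨hv.sq_sub_sq_pos hk hnk hε t, ?_⟩
  calc _ ≤ v t ^ (2 * (k : ℝ) * n / ((n : ℝ) - 2 * k) / k - 1) :=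
        rpow_sub_one_mul_rpow_one_sub_le hvt hkR (hv.rpow_div_le_sq_sub_sq hk hnk hε t)
    _ = v t ^ (((n : ℝ) + 2 * k) / ((n : ℝ) - 2 * k)) := by
        congr 1
        field_simp
        ring
    _ ≤ (ε ^ (((n : ℝ) - 2 * k) / (2 * k)) * exp (((n : ℝ) - 2 * k) / (2 * k) * |t|)) ^
          (((n : ℝ) + 2 * k) / ((n : ℝ) - 2 * k)) :=
        rpow_le_rpow hvt.le (hv.le_rpow_mul_exp hk hnk hε t) (div_pos hp hm).le
    _ = _ := by
        rw [mul_rpow (by positivity) (by positivity), ← rpow_mul hε.le, ← exp_mul]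
        congr 2 <;> field_simp

theorem delaunay_nonlinear_term_estimate
    (n k : ℤ) (hk : 0 < k) (hnk : 2 * k < n) (ε : ℝ)
    (hε : 0 < ε) (hε' : ε < (((n : ℝ) - 2 * k) / n) ^ (1 / (2 * (k : ℝ))))
    (v : ℝ → ℝ) (hv : IsDelaunay n k ε v) :
    ∀ t : ℝ,
      0 < v t ^ 2 - (2 * (k : ℝ) / ((n : ℝ) - 2 * k)) ^ 2 * deriv v t ^ 2 ∧
      v t ^ (2 * (k : ℝ) * n / ((n : ℝ) - 2 * k) - 1) *
          (v t ^ 2 - (2 * (k : ℝ) / ((n : ℝ) - 2 * k)) ^ 2 * deriv v t ^ 2) ^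
            (1 - (k : ℝ)) ≤
        ε ^ (((n : ℝ) + 2 * k) / (2 * k)) *
          Real.exp (((n : ℝ) + 2 * k) / (2 * k) * |t|) :=
  delaunay_nonlinear_term_estimate_general n k hk hnk ε hε v hv
end

section
/- Let n and k be integers with 0 < k and 2k < n, and work in E = EuclideanSpace ℝ (Fin n). There exist r₀ ∈ (0,1) and C > 0, depending only on n and k, such that for all x, a ∈ E with x ≠ 0 and ‖a‖·‖x‖ < r₀: | ‖x − ‖x‖²·a‖^((2k−n)/(2k)) − ‖x‖^((2k−n)/(2k)) · (1 + ((n−2k)/(2k)) · ⟨a, x⟩) | ≤ C · ‖a‖² · ‖x‖^((6k−n)/(2k)), where ⟨·,·⟩ is the Euclidean inner product and s^α denotes the real power of s > 0. -/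
open Real

open scoped RealInnerProductSpace

/-!
With `α = (2k - n)/(2k)` and `s = ‖a‖²‖x‖² - 2⟪a, x⟫` one has `‖x - ‖x‖² a‖² = ‖x‖² (1 + s)`,
so `‖x - ‖x‖² a‖^α = ‖x‖^α (1 + s)^(α/2)`, and `|s| ≤ 3 ‖a‖‖x‖` once `‖a‖‖x‖ ≤ 1`. The estimate
is then the second-order binomial expansion `(1 + s)^(α/2) = 1 + (α/2) s + O(s²)`, read off from
the binomial series; the `‖a‖²‖x‖²` part of `(α/2) s` is absorbed into the error term.
-/
open Topology Asymptotics

theorem Real.isBigO_one_add_rpow_sub_one_sub_mul (β : ℝ) :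
    (fun s : ℝ => (1 + s) ^ β - 1 - β * s) =O[𝓝 0] fun s => s ^ 2 := by
  have h := (one_add_rpow_hasFPowerSeriesAt_zero (a := β)).isBigO_sub_partialSum_pow 2
  simpa only [FormalMultilinearSeries.partialSum, Finset.sum_range_succ, Finset.sum_range_zero,
    binomialSeries, FormalMultilinearSeries.ofScalars_apply_eq, Ring.choose_zero_right,
    Ring.choose_one_right, zero_add, mul_one, smul_eq_mul, pow_zero, pow_one, Real.norm_eq_abs,
    sq_abs, ← sub_sub] using h

theorem Real.exists_abs_one_add_rpow_sub_one_sub_mul_le (β : ℝ) :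
    ∃ ε > 0, ∃ C > 0, ∀ s : ℝ, |s| < ε → |(1 + s) ^ β - 1 - β * s| ≤ C * s ^ 2 := by
  obtain ⟨C, hC, hO⟩ := (isBigO_one_add_rpow_sub_one_sub_mul β).exists_pos
  obtain ⟨ε, hε, hbound⟩ := Metric.eventually_nhds_iff.1 hO.bound
  refine ⟨ε, hε, C, hC, fun s hs => ?_⟩
  simpa using hbound (show dist s 0 < ε by simpa using hs)

section InnerProductSpace

variable {E : Type*} [NormedAddCommGroup E] [InnerProductSpace ℝ E]

theorem norm_sub_norm_sq_smul_sq (x a : E) :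
    ‖x - ‖x‖ ^ 2 • a‖ ^ 2 = ‖x‖ ^ 2 * (1 + (‖a‖ ^ 2 * ‖x‖ ^ 2 - 2 * ⟪a, x⟫)) := by
  rw [norm_sub_sq_real, real_inner_smul_right, real_inner_comm, norm_smul, Real.norm_eq_abs,
    abs_of_nonneg (sq_nonneg _)]
  ring

theorem one_add_norm_sq_mul_sub_two_inner_nonneg (x a : E) :
    0 ≤ 1 + (‖a‖ ^ 2 * ‖x‖ ^ 2 - 2 * ⟪a, x⟫) := by
  nlinarith [real_inner_le_norm a x, sq_nonneg (1 - ‖a‖ * ‖x‖)]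

theorem norm_sub_norm_sq_smul_rpow (x a : E) (α : ℝ) :
    ‖x - ‖x‖ ^ 2 • a‖ ^ α = ‖x‖ ^ α * (1 + (‖a‖ ^ 2 * ‖x‖ ^ 2 - 2 * ⟪a, x⟫)) ^ (α / 2) := by
  have rpow_eq_sq_rpow_half {y : ℝ} (hy : 0 ≤ y) : y ^ α = (y ^ 2) ^ (α / 2) := by
    rw [← Real.rpow_natCast, ← Real.rpow_mul hy, Nat.cast_two, mul_div_cancel₀ α two_ne_zero]
  rw [rpow_eq_sq_rpow_half (norm_nonneg _), norm_sub_norm_sq_smul_sq,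
    Real.mul_rpow (sq_nonneg _) (one_add_norm_sq_mul_sub_two_inner_nonneg x a),
    ← rpow_eq_sq_rpow_half (norm_nonneg _)]

theorem abs_norm_sq_mul_sub_two_inner_le {x a : E} (h : ‖a‖ * ‖x‖ ≤ 1) :
    |‖a‖ ^ 2 * ‖x‖ ^ 2 - 2 * ⟪a, x⟫| ≤ 3 * (‖a‖ * ‖x‖) := by
  have hinner := abs_real_inner_le_norm a x
  have hsq : (‖a‖ * ‖x‖) ^ 2 ≤ ‖a‖ * ‖x‖ := by
    nlinarith [mul_nonneg (norm_nonneg a) (norm_nonneg x)]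
  rw [abs_le] at hinner ⊢
  constructor <;> nlinarith

theorem exists_abs_norm_sub_norm_sq_smul_rpow_sub_le (α : ℝ) :
    ∃ r₀ ∈ Set.Ioo (0 : ℝ) 1, ∃ C > 0, ∀ x a : E, x ≠ 0 → ‖a‖ * ‖x‖ < r₀ →
      |‖x - ‖x‖ ^ 2 • a‖ ^ α - ‖x‖ ^ α * (1 - α * ⟪a, x⟫)| ≤
        C * ‖a‖ ^ 2 * ‖x‖ ^ (α + 2) := by
  obtain ⟨ε, hε, C, hC, htaylor⟩ := Real.exists_abs_one_add_rpow_sub_one_sub_mul_le (α / 2)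
  refine ⟨min (ε / 3) (1 / 2), ⟨by positivity, by norm_num⟩, 9 * C + |α / 2|, by positivity,
    ?_⟩
  intro x a hx hax
  set t := ‖a‖ * ‖x‖ with ht
  set s := ‖a‖ ^ 2 * ‖x‖ ^ 2 - 2 * ⟪a, x⟫ with hs
  have ht_le : t ≤ 1 := by linarith [min_le_right (ε / 3) (1 / 2)]
  have hs_le : |s| ≤ 3 * t := abs_norm_sq_mul_sub_two_inner_le ht_le
  have hs_lt : |s| < ε := by linarith [min_le_left (ε / 3) (1 / 2)]
  have hs_sq : s ^ 2 ≤ 9 * t ^ 2 := by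
    nlinarith [sq_abs s, abs_nonneg s]
  have hsplit : (1 + s) ^ (α / 2) - (1 - α * ⟪a, x⟫) =
      ((1 + s) ^ (α / 2) - 1 - α / 2 * s) + α / 2 * t ^ 2 := by
    rw [hs, ht]; ring
  have hexpansion : |(1 + s) ^ (α / 2) - (1 - α * ⟪a, x⟫)| ≤ (9 * C + |α / 2|) * t ^ 2 :=
    calc |(1 + s) ^ (α / 2) - (1 - α * ⟪a, x⟫)|
        ≤ |(1 + s) ^ (α / 2) - 1 - α / 2 * s| + |α / 2 * t ^ 2| := hsplit ▸ abs_add_le _ _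
      _ ≤ C * s ^ 2 + |α / 2| * t ^ 2 := by
          rw [abs_mul, abs_of_nonneg (sq_nonneg t)]
          gcongr
          exact htaylor s hs_lt
      _ ≤ (9 * C + |α / 2|) * t ^ 2 := by nlinarith
  have hnorm_pos : 0 < ‖x‖ := norm_pos_iff.mpr hx
  calc |‖x - ‖x‖ ^ 2 • a‖ ^ α - ‖x‖ ^ α * (1 - α * ⟪a, x⟫)|
      = ‖x‖ ^ α * |(1 + s) ^ (α / 2) - (1 - α * ⟪a, x⟫)| := by
        rw [norm_sub_norm_sq_smul_rpow, ← mul_sub, abs_mul, abs_of_pos (by positivity)]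
    _ ≤ ‖x‖ ^ α * ((9 * C + |α / 2|) * t ^ 2) := by gcongr
    _ = (9 * C + |α / 2|) * ‖a‖ ^ 2 * ‖x‖ ^ (α + 2) := by
        rw [Real.rpow_add hnorm_pos, Real.rpow_two, ht]
        ring

end InnerProductSpace

theorem inverted_norm_power_expansion_general
    (n k : ℤ) (hk : 0 < k) :
    ∃ r₀ : ℝ, r₀ ∈ Set.Ioo (0 : ℝ) 1 ∧
      ∃ C : ℝ, 0 < C ∧
        ∀ x a : EuclideanSpace ℝ (Fin n.toNat), x ≠ 0 → ‖a‖ * ‖x‖ < r₀ →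
          |‖x - ‖x‖ ^ 2 • a‖ ^ ((2 * (k : ℝ) - n) / (2 * k)) -
              ‖x‖ ^ ((2 * (k : ℝ) - n) / (2 * k)) *
                (1 + ((n : ℝ) - 2 * k) / (2 * k) * ⟪a, x⟫)| ≤
            C * ‖a‖ ^ 2 * ‖x‖ ^ ((6 * (k : ℝ) - n) / (2 * k)) := by
  have hk0 : (k : ℝ) ≠ 0 := by exact_mod_cast hk.ne'
  have hcoeff : ((n : ℝ) - 2 * k) / (2 * k) = -((2 * (k : ℝ) - n) / (2 * k)) := by ring
  have hexp : (6 * (k : ℝ) - n) / (2 * k) = (2 * (k : ℝ) - n) / (2 * k) + 2 := by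
    field_simp; ring
  rw [hcoeff, hexp]
  simpa only [neg_mul, ← sub_eq_add_neg] using
    exists_abs_norm_sub_norm_sq_smul_rpow_sub_le (E := EuclideanSpace ℝ (Fin n.toNat))
      ((2 * (k : ℝ) - n) / (2 * k))

theorem inverted_norm_power_expansion
    (n k : ℤ) (hk : 0 < k) (hnk : 2 * k < n) :
    ∃ r₀ : ℝ, r₀ ∈ Set.Ioo (0 : ℝ) 1 ∧
      ∃ C : ℝ, 0 < C ∧
        ∀ x a : EuclideanSpace ℝ (Fin n.toNat), x ≠ 0 → ‖a‖ * ‖x‖ < r₀ →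
          |‖x - ‖x‖ ^ 2 • a‖ ^ ((2 * (k : ℝ) - n) / (2 * k)) -
              ‖x‖ ^ ((2 * (k : ℝ) - n) / (2 * k)) *
                (1 + ((n : ℝ) - 2 * k) / (2 * k) * ⟪a, x⟫)| ≤
            C * ‖a‖ ^ 2 * ‖x‖ ^ ((6 * (k : ℝ) - n) / (2 * k)) :=
  inverted_norm_power_expansion_general n k hk
end
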